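/- arXiv:1606.03988 — 5 statements merged into one kernel-verified Lean document; each statement's English description precedes it below -/
import Mathlib

section
/- Let $A$ and $B$ be $n \times n$ complex matrices. Then $|\det(A) - \det(B)| \leq n \cdot \|A - B\|_{\max} \cdot \max(\|A\|_{\max}, \|B\|_{\max})^{n-1} \cdot n^{n/2}$, where $\|M\|_{\max} := \max_{i,j} |M_{ij}|$. -/
/-!
The determinant is multilinear in the rows, so `det A - det B` telescopes into `n` determinants
of matrices having one row of `A - B` and all other rows from `A` or `B`. Each of these is bounded
by Hadamard's inequality `|det C| ≤ ∏ i, ‖C i‖₂`, which follows from Gram–Schmidt: in the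
orthonormal basis `b` obtained from the rows, the coordinate matrix of the rows is triangular with
diagonal `⟪b i, C i⟫`. Finally a row with entries of modulus at most `c` has Euclidean norm at
most `√n * c`, and `√n ^ n = n ^ (n / 2)`.
-/

/-- The max-norm of a complex matrix: the supremum of the absolute values of its entries. -/
noncomputable def maxNorm {n : ℕ} (M : Matrix (Fin n) (Fin n) ℂ) : ℝ :=
  ⨆ i, ⨆ j, ‖M i j‖

open Finset InnerProductSpace

theorem OrthonormalBasis.norm_det_le_prod_norm {𝕜 E ι : Type*} [RCLike 𝕜] [NormedAddCommGroup E]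
    [InnerProductSpace 𝕜 E] [Fintype ι] [DecidableEq ι] (e : OrthonormalBasis ι 𝕜 E)
    (v : ι → E) : ‖e.toBasis.det v‖ ≤ ∏ i, ‖v i‖ := by
  -- Gram–Schmidt needs an order on `ι`; any one will do.
  let : LinearOrder ι := LinearOrder.lift' _ (Fintype.equivFin ι).injective
  let : LocallyFiniteOrderBot ι :=
    LocallyFiniteOrderBot.ofIic ι (fun a => univ.filter (· ≤ a)) (by simp)
  have : FiniteDimensional 𝕜 E := e.toBasis.finiteDimensional_of_finite
  let b := gramSchmidtOrthonormalBasis (Module.finrank_eq_card_basis e.toBasis) v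
  have hdet : e.toBasis.det v = e.toBasis.det b * b.toBasis.det v := by
    conv_lhs => rw [AlternatingMap.eq_smul_basis_det b.toBasis e.toBasis.det]
    simp
  rw [hdet, norm_mul, e.det_to_matrix_orthonormalBasis, one_mul,
    gramSchmidtOrthonormalBasis_det, norm_prod]
  gcongr with i
  calc ‖inner 𝕜 (b i) (v i)‖ ≤ ‖b i‖ * ‖v i‖ := norm_inner_le_norm _ _
    _ = ‖v i‖ := by rw [b.orthonormal.1 i, one_mul]

theorem Matrix.det_eq_basisFun_det_toLp {𝕜 ι : Type*} [RCLike 𝕜] [Fintype ι] [DecidableEq ι]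
    (C : Matrix ι ι 𝕜) :
    C.det = (EuclideanSpace.basisFun ι 𝕜).toBasis.det (fun i => WithLp.toLp 2 (C i)) := by
  rw [Module.Basis.det_apply, ← Matrix.det_transpose]
  rfl

theorem Matrix.norm_det_sub_det_le {𝕜 ι : Type*} [RCLike 𝕜] [Fintype ι] [DecidableEq ι]
    {A B : Matrix ι ι 𝕜} {r d : ℝ} (hA : ∀ i, ‖WithLp.toLp 2 (A i)‖ ≤ r)
    (hB : ∀ i, ‖WithLp.toLp 2 (B i)‖ ≤ r) (hAB : ∀ i, ‖WithLp.toLp 2 (A i - B i)‖ ≤ d) :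
    ‖A.det - B.det‖ ≤ Fintype.card ι * r ^ (Fintype.card ι - 1) * d := by
  rcases isEmpty_or_nonempty ι with hι | hι
  · simp
  let rowsA := fun i => WithLp.toLp 2 (A i)
  let rowsB := fun i => WithLp.toLp 2 (B i)
  have key := (EuclideanSpace.basisFun ι 𝕜).toBasis.det.norm_image_sub_le_of_bound zero_le_one
    (by simpa using OrthonormalBasis.norm_det_le_prod_norm _) rowsA rowsB
  rw [A.det_eq_basisFun_det_toLp, B.det_eq_basisFun_det_toLp]
  refine key.trans ?_
  have hmax : max ‖rowsA‖ ‖rowsB‖ ≤ r :=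
    max_le ((pi_norm_le_iff_of_nonempty _).2 hA) ((pi_norm_le_iff_of_nonempty _).2 hB)
  have hdiff : ‖rowsA - rowsB‖ ≤ d := (pi_norm_le_iff_of_nonempty _).2 hAB
  have hr : 0 ≤ r := (norm_nonneg _).trans (hA hι.some)
  rw [one_mul]
  gcongr

theorem EuclideanSpace.norm_toLp_le_sqrt_card_mul {𝕜 ι : Type*} [RCLike 𝕜] [Fintype ι]
    {x : ι → 𝕜} {c : ℝ} (hc : 0 ≤ c) (h : ∀ j, ‖x j‖ ≤ c) :
    ‖WithLp.toLp 2 x‖ ≤ √(Fintype.card ι) * c := by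
  rw [EuclideanSpace.norm_eq, ← Real.sqrt_sq hc, ← Real.sqrt_mul (Nat.cast_nonneg _)]
  gcongr
  calc ∑ j, ‖x j‖ ^ 2 ≤ ∑ _j : ι, c ^ 2 := by gcongr with j; exact h j
    _ = _ := by simp

theorem norm_le_maxNorm {n : ℕ} (M : Matrix (Fin n) (Fin n) ℂ) (i j : Fin n) :
    ‖M i j‖ ≤ maxNorm M :=
  le_ciSup_of_le (Set.finite_range _).bddAbove i <|
    le_ciSup (f := fun j => ‖M i j‖) (Set.finite_range _).bddAbove j

theorem maxNorm_nonneg {n : ℕ} (M : Matrix (Fin n) (Fin n) ℂ) : 0 ≤ maxNorm M :=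
  Real.iSup_nonneg fun _ => Real.iSup_nonneg fun _ => norm_nonneg _

/-- `|det A - det B| ≤ n ‖A-B‖_max max(‖A‖_max,‖B‖_max)^{n-1} n^{n/2}`. -/
theorem stmt0 (n : ℕ) (A B : Matrix (Fin n) (Fin n) ℂ) :
    ‖A.det - B.det‖ ≤
      (n : ℝ) * maxNorm (A - B) * max (maxNorm A) (maxNorm B) ^ (n - 1) *
        (n : ℝ) ^ ((n : ℝ) / 2) := by
  set m := max (maxNorm A) (maxNorm B)
  have hm : 0 ≤ m := (maxNorm_nonneg A).trans (le_max_left _ _)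
  have hrow {M : Matrix (Fin n) (Fin n) ℂ} {c : ℝ} (hc : 0 ≤ c) (hM : maxNorm M ≤ c) (i : Fin n) :
      ‖WithLp.toLp 2 (M i)‖ ≤ √n * c := by
    simpa using EuclideanSpace.norm_toLp_le_sqrt_card_mul hc
      fun j => (norm_le_maxNorm M i j).trans hM
  have key := Matrix.norm_det_sub_det_le (hrow hm (le_max_left _ _))
    (hrow hm (le_max_right _ _)) (hrow (maxNorm_nonneg (A - B)) le_rfl)
  rw [Fintype.card_fin] at key
  refine key.trans_eq ?_
  rw [Real.rpow_div_two_eq_sqrt _ n.cast_nonneg, Real.rpow_natCast]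
  rcases n with _ | n
  · simp
  · simp only [Nat.add_sub_cancel, pow_succ, mul_pow]
    ring
end

section
/- Let $X$ be a nonnegative-integer-valued random variable such that for every $j \in \{0, 1, \ldots, k\}$ the $j$-th factorial moment satisfies $\mathbb{E}[X(X-1)\cdots(X-j+1)] \leq \kappa \lambda^j$ for some constants $\kappa \geq 1$ and $\lambda \geq 0$. Then $\mathbb{E}[X^k] \leq \kappa \, \mathbb{E}[P^k]$, where $P$ is a Poisson random variable with mean $\lambda$. -/
open MeasureTheory

/-- Stirling numbers of the second kind. -/
def stir : ℕ → ℕ → ℕ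
  | 0, 0 => 1
  | 0, _+1 => 0
  | _+1, 0 => 0
  | k+1, j+1 => stir k j + (j+1) * stir k (j+1)

lemma stir_eq_zero : ∀ {k j : ℕ}, k < j → stir k j = 0
  | 0, 0, h => absurd h (by omega)
  | 0, _+1, _ => rfl
  | _+1, 0, h => absurd h (by omega)
  | k+1, j+1, h => by
    rw [stir, stir_eq_zero (by omega), stir_eq_zero (by omega)]
    simp

lemma mul_descFactorial (n j : ℕ) :
    n * n.descFactorial j = n.descFactorial (j+1) + j * n.descFactorial j := by
  rcases le_or_gt j n with h | h
  · rw [Nat.descFactorial_succ, ← Nat.add_mul, Nat.sub_add_cancel h]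
  · rw [Nat.descFactorial_eq_zero_iff_lt.2 h,
      Nat.descFactorial_eq_zero_iff_lt.2 (h.trans (Nat.lt_succ_self j))]
    simp

lemma pow_eq_sum_stir (k n : ℕ) :
    n ^ k = ∑ j ∈ Finset.range (k+1), stir k j * n.descFactorial j := by
  induction k with
  | zero => simp [stir]
  | succ k ih =>
    have h1 : n ^ (k+1) = ∑ j ∈ Finset.range (k+1),
        (stir k j * n.descFactorial (j+1) + j * (stir k j * n.descFactorial j)) := by
      rw [pow_succ, ih, Finset.sum_mul]
      refine Finset.sum_congr rfl fun j _ => ?_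
      rw [mul_assoc, mul_comm (n.descFactorial j) n, mul_descFactorial]
      ring
    rw [h1, Finset.sum_add_distrib]
    -- RHS : reindex
    rw [Finset.sum_range_succ' (fun j => stir (k+1) j * n.descFactorial j) (k+1)]
    have h0 : stir (k+1) 0 * n.descFactorial 0 = 0 := by simp [stir]
    rw [h0, add_zero]
    have h2 : ∀ j, stir (k+1) (j+1) * n.descFactorial (j+1)
        = stir k j * n.descFactorial (j+1) + (j+1) * (stir k (j+1) * n.descFactorial (j+1)) := by
      intro j; rw [show stir (k+1) (j+1) = stir k j + (j+1) * stir k (j+1) from rfl]; ring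
    simp only [h2]
    rw [Finset.sum_add_distrib]
    congr 1
    -- ∑_{j<k+1} (j+1) * stir k (j+1) * descF (j+1) = ∑_{j<k+1} j * stir k j * descF j
    rw [Finset.sum_range_succ' (fun j => j * (stir k j * n.descFactorial j)) k]
    simp only [Nat.zero_mul, add_zero, zero_mul]
    rw [Finset.sum_range_succ]
    rw [stir_eq_zero (Nat.lt_succ_self k)]
    simp

lemma pow_eq_sum_stir_real (k n : ℕ) :
    (n : ℝ) ^ k = ∑ j ∈ Finset.range (k+1), (stir k j : ℝ) * (n.descFactorial j : ℝ) := by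
  rw [← Nat.cast_pow, pow_eq_sum_stir]
  push_cast
  rfl

/-- If all factorial moments up to order `k` of an ℕ-valued random variable `X` are bounded by
`κ λ^j`, then the `k`-th moment of `X` is bounded by `κ` times the `k`-th moment of a Poisson
random variable with mean `λ`. -/
theorem stmt3 {Ω : Type*} [MeasurableSpace Ω] (μ : Measure Ω) [IsProbabilityMeasure μ]
    (X : Ω → ℕ) (hX : Measurable X) (k : ℕ) (κ lam : ℝ) (hκ : 1 ≤ κ) (hlam : 0 ≤ lam)
    (hfact : ∀ j ≤ k, (∫ ω, ((X ω).descFactorial j : ℝ) ∂μ) ≤ κ * lam ^ j) :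
    (∫ ω, ((X ω : ℝ)) ^ k ∂μ) ≤
      κ * ∑' m : ℕ, (m : ℝ) ^ k * (Real.exp (-lam) * lam ^ m / m.factorial) := by
  have hκ0 : (0:ℝ) < κ := lt_of_lt_of_le one_pos hκ
  set w : ℕ → ℝ := fun m => Real.exp (-lam) * lam ^ m / m.factorial with hw
  have hw0 : ∀ m, 0 ≤ w m := fun m => by
    apply div_nonneg (mul_nonneg (Real.exp_pos _).le (pow_nonneg hlam m)) (by positivity)
  -- factorial moments of Poisson
  have hpois : ∀ j : ℕ, HasSum (fun m => ((m.descFactorial j : ℝ)) * w m) (lam ^ j) := by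
    intro j
    have hsupp : ∀ m ∉ Set.range (fun n : ℕ => n + j),
        ((m.descFactorial j : ℝ)) * w m = 0 := by
      intro m hm
      rcases le_or_gt j m with h | h
      · exact absurd ⟨m - j, Nat.sub_add_cancel h⟩ hm
      · simp [Nat.descFactorial_eq_zero_iff_lt.2 h]
    have hinj : Function.Injective (fun n : ℕ => n + j) := add_left_injective j
    have hcomp : ∀ n : ℕ, ((n + j).descFactorial j : ℝ) * w (n + j)
        = (Real.exp (-lam) * lam ^ j) * (lam ^ n / n.factorial) := by
      intro n
      have hdf : (n + j).descFactorial j * n.factorial = (n + j).factorial := by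
        rw [Nat.add_descFactorial_eq_ascFactorial, mul_comm,
          Nat.factorial_mul_ascFactorial]
      have hfac : ((n+j).factorial : ℝ) ≠ 0 := by positivity
      have hdfr : ((n + j).descFactorial j : ℝ) = ((n+j).factorial : ℝ) / (n.factorial : ℝ) := by
        field_simp
        exact_mod_cast hdf
      simp only [hw, hdfr, pow_add]
      field_simp
    have hg : HasSum (fun n : ℕ => (Real.exp (-lam) * lam ^ j) * (lam ^ n / n.factorial))
        ((Real.exp (-lam) * lam ^ j) * Real.exp lam) := by
      apply HasSum.mul_left
      have := (Real.summable_pow_div_factorial lam).hasSum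
      rwa [show ∑' n : ℕ, lam ^ n / n.factorial = Real.exp lam by
        rw [Real.exp_eq_exp_ℝ, NormedSpace.exp_eq_tsum_div]] at this
    have hsum : HasSum (fun n : ℕ => ((n + j).descFactorial j : ℝ) * w (n + j))
        ((Real.exp (-lam) * lam ^ j) * Real.exp lam) := by
      rw [funext hcomp]; exact hg
    have heq : (Real.exp (-lam) * lam ^ j) * Real.exp lam = lam ^ j := by
      rw [Real.exp_neg]; field_simp
    exact (hinj.hasSum_iff hsupp).1 (heq ▸ hsum)
  -- k-th moment of Poisson
  have hmomsum : HasSum (fun m : ℕ => (m : ℝ) ^ k * w m)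
      (∑ j ∈ Finset.range (k+1), (stir k j : ℝ) * lam ^ j) := by
    have : (fun m : ℕ => (m : ℝ) ^ k * w m)
        = fun m : ℕ => ∑ j ∈ Finset.range (k+1),
            (stir k j : ℝ) * (((m.descFactorial j : ℝ)) * w m) := by
      funext m
      rw [pow_eq_sum_stir_real, Finset.sum_mul]
      exact Finset.sum_congr rfl fun j _ => by ring
    rw [this]
    exact hasSum_sum fun j _ => (hpois j).mul_left _
  have hmom : ∑' m : ℕ, (m : ℝ) ^ k * w m
      = ∑ j ∈ Finset.range (k+1), (stir k j : ℝ) * lam ^ j := hmomsum.tsum_eq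
  rw [hmom]
  by_cases hint : Integrable (fun ω => ((X ω : ℝ)) ^ k) μ
  · -- integrable case
    have hintd : ∀ j ≤ k, Integrable (fun ω => ((X ω).descFactorial j : ℝ)) μ := by
      intro j hj
      have hb : ∀ ω, ‖((X ω).descFactorial j : ℝ)‖ ≤ ((X ω : ℝ)) ^ k + 1 := by
        intro ω
        rw [Real.norm_eq_abs, abs_of_nonneg (by positivity)]
        have h1 : (X ω).descFactorial j ≤ (X ω) ^ k + 1 := by
          rcases Nat.eq_zero_or_pos (X ω) with h | h
          · rw [h]; rcases j with _ | j <;> simp [Nat.descFactorial]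
          · calc (X ω).descFactorial j ≤ (X ω) ^ j := Nat.descFactorial_le_pow _ _
              _ ≤ (X ω) ^ k := Nat.pow_le_pow_right h hj
              _ ≤ (X ω) ^ k + 1 := Nat.le_succ _
        exact_mod_cast h1
      have hmeas : AEStronglyMeasurable (fun ω => ((X ω).descFactorial j : ℝ)) μ :=
        ((measurable_from_nat (f := fun n : ℕ => ((n.descFactorial j : ℝ)))).comp
          hX).aestronglyMeasurable
      refine (hint.add (integrable_const 1)).mono hmeas
        (Filter.Eventually.of_forall fun ω => ?_)
      simp only [Pi.add_apply]
      rw [show ‖((X ω : ℝ)) ^ k + 1‖ = ((X ω : ℝ)) ^ k + 1 from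
        by rw [Real.norm_eq_abs, abs_of_nonneg (by positivity)]]
      exact hb ω
    have hexp : (∫ ω, ((X ω : ℝ)) ^ k ∂μ)
        = ∑ j ∈ Finset.range (k+1), (stir k j : ℝ) * ∫ ω, ((X ω).descFactorial j : ℝ) ∂μ := by
      rw [show (fun ω => ((X ω : ℝ)) ^ k) = fun ω => ∑ j ∈ Finset.range (k+1),
          (stir k j : ℝ) * ((X ω).descFactorial j : ℝ) from funext fun ω =>
          pow_eq_sum_stir_real k (X ω)]
      rw [integral_finset_sum _ fun j hj =>
        ((hintd j (Nat.lt_succ_iff.1 (Finset.mem_range.1 hj))).const_mul _)]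
      exact Finset.sum_congr rfl fun j _ => integral_const_mul _ _
    rw [hexp, Finset.mul_sum]
    apply Finset.sum_le_sum
    intro j hj
    have := hfact j (Nat.lt_succ_iff.1 (Finset.mem_range.1 hj))
    calc (stir k j : ℝ) * ∫ ω, ((X ω).descFactorial j : ℝ) ∂μ
        ≤ (stir k j : ℝ) * (κ * lam ^ j) := by
          apply mul_le_mul_of_nonneg_left this (by positivity)
      _ = κ * ((stir k j : ℝ) * lam ^ j) := by ring
  · -- non-integrable case: integral is zero
    rw [integral_undef hint]
    apply mul_nonneg hκ0.le
    apply Finset.sum_nonneg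
    intro j _
    positivity
end

section
/- For every $k \geq 2$ and every tuple of points $v = (v_1, \ldots, v_k) \in (\mathbb{R}^d)^k$, there exists a partition of $\{1, \ldots, k\}$ into two nonempty sets $S$ and $T$ such that $\min_{i \in S, j \in T} |v_i - v_j| \geq D_k(v)/k^2$, where $D_k(v) := \max_{i \leq k} \sum_{j=1}^k |v_i - v_j|$. -/
/-!
Let `a, b` realise the largest pairwise distance `M`, so `D_k(v) ≤ k M`. The `k` numbers
`|v_a - v_j|` lie in `[0, M]` and one of them is `0`, so at most `k - 1` of them meet the `k`
intervals `(tM/k, (t+1)M/k]`, `t < k`. Cutting at an empty interval separates `a` from `b`,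
and by the triangle inequality the two sides are at distance at least `M/k ≥ D_k(v)/k²`.
-/

open Set

lemma eq_of_mem_Ioc_mul_of_mem_Ioc_mul {ε x : ℝ} {s t : ℕ}
    (hs : x ∈ Ioc (s * ε) (s * ε + ε)) (ht : x ∈ Ioc (t * ε) (t * ε + ε)) : s = t := by
  have hε : 0 < ε := by linarith [hs.1, hs.2]
  have key : ∀ {m n : ℕ}, m < n → x ∈ Ioc (m * ε) (m * ε + ε) → x ∉ Ioc (n * ε) (n * ε + ε) := by
    intro m n hmn hm hn
    have : (m : ℝ) + 1 ≤ n := by exact_mod_cast hmn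
    nlinarith [hm.2, hn.1]
  rcases lt_trichotomy s t with h | h | h
  · exact absurd ht (key h hs)
  · exact h
  · exact absurd hs (key h ht)

/-- Pigeonhole: the values other than `f i₀` are too few to meet all these intervals. -/
lemma exists_forall_notMem_Ioc {ι : Type*} [Fintype ι] (f : ι → ℝ) {ε : ℝ} (hε : 0 ≤ ε)
    {i₀ : ι} (h₀ : f i₀ ≤ 0) :
    ∃ t < Fintype.card ι, ∀ j, f j ∉ Ioc (t * ε) (t * ε + ε) := by
  by_contra! h
  choose φ hφ using fun t : Fin (Fintype.card ι) => h t t.isLt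
  have hinj : Function.Injective φ := fun s t hst =>
    Fin.ext (eq_of_mem_Ioc_mul_of_mem_Ioc_mul (hφ s) (hst ▸ hφ t))
  obtain ⟨t, ht⟩ := ((Fintype.bijective_iff_injective_and_card φ).2 ⟨hinj, by simp⟩).2 i₀
  have := (hφ t).1
  rw [ht] at this
  nlinarith [(Nat.cast_nonneg t : (0 : ℝ) ≤ t)]

lemma lt_dist_of_forall_notMem_Ioc {ι X : Type*} [PseudoMetricSpace X] {p : X} {x : ι → X}
    {r ε : ℝ} (hgap : ∀ j, dist p (x j) ∉ Ioc r (r + ε)) {i j : ι}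
    (hi : dist p (x i) ≤ r) (hj : r < dist p (x j)) : ε < dist (x i) (x j) := by
  have hj' : r + ε < dist p (x j) := lt_of_not_ge fun h => hgap j ⟨hj, h⟩
  linarith [dist_triangle p (x i) (x j)]

lemma exists_finset_mem_notMem_div_card_le_dist {ι X : Type*} [Fintype ι] [PseudoMetricSpace X]
    (v : ι → X) {a b : ι} (hab : a ≠ b) :
    ∃ S : Finset ι, a ∈ S ∧ b ∉ S ∧
      ∀ i ∈ S, ∀ j ∉ S, dist (v a) (v b) / Fintype.card ι ≤ dist (v i) (v j) := by
  classical
  rcases (dist_nonneg : 0 ≤ dist (v a) (v b)).eq_or_lt with hzero | hpos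
  · refine ⟨{a}, Finset.mem_singleton_self a, by simpa using hab.symm, fun i _ j _ => ?_⟩
    rw [← hzero, zero_div]
    exact dist_nonneg
  set ε := dist (v a) (v b) / Fintype.card ι with hε_def
  have hcard : (0 : ℝ) < Fintype.card ι := by exact_mod_cast Fintype.card_pos_iff.2 ⟨a⟩
  have hε : 0 < ε := div_pos hpos hcard
  obtain ⟨t, htcard, hgap⟩ :=
    exists_forall_notMem_Ioc (fun j => dist (v a) (v j)) hε.le (dist_self (v a)).le
  refine ⟨Finset.univ.filter fun j => dist (v a) (v j) ≤ t * ε, ?_, ?_, ?_⟩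
  · simp only [Finset.mem_filter, Finset.mem_univ, true_and, dist_self]
    positivity
  · have ht : (t : ℝ) + 1 ≤ Fintype.card ι := by exact_mod_cast htcard
    have hM : dist (v a) (v b) = Fintype.card ι * ε := by
      rw [hε_def, mul_div_cancel₀ _ hcard.ne']
    simp only [Finset.mem_filter, Finset.mem_univ, true_and, not_le]
    nlinarith
  · intro i hi j hj
    simp only [Finset.mem_filter, Finset.mem_univ, true_and, not_le] at hi hj
    exact (lt_dist_of_forall_notMem_Ioc hgap hi hj).le

lemma exists_ne_forall_dist_le {ι X : Type*} [Finite ι] [Nontrivial ι] [PseudoMetricSpace X]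
    (v : ι → X) : ∃ a b, a ≠ b ∧ ∀ i j, dist (v i) (v j) ≤ dist (v a) (v b) := by
  obtain ⟨⟨a, b⟩, hmax⟩ := Finite.exists_max fun p : ι × ι => dist (v p.1) (v p.2)
  obtain rfl | hab := eq_or_ne a b
  · obtain ⟨c, hc⟩ := exists_ne a
    refine ⟨a, c, hc.symm, fun i j => (hmax (i, j)).trans ?_⟩
    simp only [dist_self, dist_nonneg]
  · exact ⟨a, b, hab, fun i j => hmax (i, j)⟩

lemma iSup_sum_dist_le_card_mul {ι X : Type*} [Fintype ι] [Nonempty ι] [PseudoMetricSpace X]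
    (v : ι → X) {M : ℝ} (hM : ∀ i j, dist (v i) (v j) ≤ M) :
    ⨆ i, ∑ j, dist (v i) (v j) ≤ Fintype.card ι * M :=
  ciSup_le fun i => by
    simpa using Finset.sum_le_card_nsmul Finset.univ _ M fun j _ => hM i j

/-- For every tuple `v = (v₁,…,v_k)` of points in `ℝ^d` (`k ≥ 2`), there is a partition of
`{1,…,k}` into two nonempty sets `S`, `T = Sᶜ` such that the minimal distance between the
two groups is at least `D_k(v)/k²`, where `D_k(v) = max_i ∑_j |v_i - v_j|` is the `ℓ¹` diameter. -/
theorem stmt4 (d k : ℕ) (hk : 2 ≤ k) (v : Fin k → EuclideanSpace ℝ (Fin d)) :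
    ∃ S : Finset (Fin k), S.Nonempty ∧ Sᶜ.Nonempty ∧
      ∀ i ∈ S, ∀ j ∈ Sᶜ,
        dist (v i) (v j) ≥ (⨆ i, ∑ j, dist (v i) (v j)) / (k : ℝ) ^ 2 := by
  have : Nontrivial (Fin k) := Fin.nontrivial_iff_two_le.mpr hk
  have hk0 : (0 : ℝ) < k := by exact_mod_cast (by omega : 0 < k)
  obtain ⟨a, b, hab, hmax⟩ := exists_ne_forall_dist_le v
  obtain ⟨S, haS, hbS, hsep⟩ := exists_finset_mem_notMem_div_card_le_dist v hab
  have hD : (⨆ i, ∑ j, dist (v i) (v j)) / (k : ℝ) ^ 2 ≤ dist (v a) (v b) / k := by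
    have := iSup_sum_dist_le_card_mul v hmax
    rw [Fintype.card_fin] at this
    rw [div_le_div_iff₀ (by positivity) hk0]
    nlinarith
  refine ⟨S, ⟨a, haS⟩, ⟨b, Finset.mem_compl.2 hbS⟩, fun i hi j hj => ?_⟩
  have := hsep i hi j (Finset.mem_compl.1 hj)
  rw [Fintype.card_fin] at this
  exact hD.trans this
end

section
/- Let $F({\mathcal X}) = \frac{1}{k!}\sum_{\mathbf{x} \in {\mathcal X}^{(k)}} f(\mathbf{x})$ and $G({\mathcal X}) = \frac{1}{l!}\sum_{\mathbf{x}' \in {\mathcal X}^{(l)}} g(\mathbf{x}')$ be U-statistics of orders $k$ and $l$ on a finite set ${\mathcal X} \subset \mathbb{R}^d$, where $f, g$ are symmetric. Then the product $F \cdot G$ equals $\sum_{m=\max(k,l)}^{k+l} \sum_{\mathbf{z} \in {\mathcal X}^{(m)}} \frac{f(z_1,\ldots,z_k) g(z_{m-l+1},\ldots,z_m)}{(k+l-m)!\,(m-k)!\,(m-l)!}$; in particular, $F \cdot G$ is a finite sum of U-statistics of order at most $k+l$. -/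
/-- The set of `m`-tuples of pairwise distinct elements of the finite set `X`. -/
def tuples {E : Type*} [DecidableEq E] (X : Finset E) (m : ℕ) : Finset (Fin m → E) :=
  (Fintype.piFinset fun _ : Fin m => X).filter Function.Injective

/-- The kernel `z ↦ f(z₁,…,z_k)·g(z_{m-l+1},…,z_m)` on `m`-tuples (and `0` if `m < k` or
`m < l`). -/
noncomputable def prodKernel {E : Type*} {k l : ℕ} (f : (Fin k → E) → ℝ)
    (g : (Fin l → E) → ℝ) (m : ℕ) (z : Fin m → E) : ℝ :=
  if h : k ≤ m ∧ l ≤ m then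
    f (fun i => z (Fin.castLE h.1 i)) *
      g (fun i => z ⟨m - l + i.val, by have h2 := h.2; have h3 := i.isLt; omega⟩)
  else 0

/-! A symmetric kernel only depends on the set of entries of its (injective) argument, so
`∑_{x ∈ X^(k)} f x = k! ∑_{|A| = k} f(A)` and the product of the two U-statistics is
`∑_{A, B} f(A) g(B)`. Group the pairs `(A, B)` by `m = |A ∪ B|`. The `m`-tuples of distinct
points whose first `k` entries enumerate `A` and whose last `l` entries enumerate `B` are the
injections of `Fin m` into `A ∪ B` sending the positions `< m - l`, `[m - l, k)` and `≥ k` into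
`A \ B`, `A ∩ B` and `B \ A` respectively; there are `(m - l)! (k + l - m)! (m - k)!` of them. -/

open Finset Function

section
variable {α ι E : Type*} [Fintype α] [DecidableEq α] [Fintype ι] [DecidableEq ι] [DecidableEq E]

theorem card_injective_fiberwise (S : Finset E) (κ : E → ι) (s : α → ι) :
    #{z ∈ Fintype.piFinset fun _ : α => S | Injective z ∧ ∀ a, κ (z a) = s a} =
      ∏ i, (#{x ∈ S | κ x = i}).descFactorial #{a | s a = i} := by
  have mem {z : α → E} :
      z ∈ {z ∈ Fintype.piFinset fun _ : α => S | Injective z ∧ ∀ a, κ (z a) = s a} ↔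
        (∀ a, z a ∈ S) ∧ Injective z ∧ ∀ a, κ (z a) = s a := by
    simp [Fintype.mem_piFinset]
  have eval_cast (F : (i : ι) → ({a // s a = i} ↪ {x // x ∈ S.filter (κ · = i)})) {i j : ι}
      (h : i = j) (a : α) (ha : s a = i) : (F i ⟨a, ha⟩ : E) = F j ⟨a, ha.trans h⟩ := by
    subst h; rfl
  let e : {z // z ∈ {z ∈ Fintype.piFinset fun _ : α => S | Injective z ∧ ∀ a, κ (z a) = s a}} ≃
      ((i : ι) → ({a // s a = i} ↪ {x // x ∈ S.filter (κ · = i)})) :=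
    { toFun := fun z i =>
        ⟨fun a => ⟨z.1 a.1, mem_filter.2 ⟨(mem.1 z.2).1 a, ((mem.1 z.2).2.2 a).trans a.2⟩⟩,
         fun a b h => Subtype.ext ((mem.1 z.2).2.1 (congrArg Subtype.val h))⟩
      invFun := fun F => ⟨fun a => F (s a) ⟨a, rfl⟩, by
          have hF (a : α) := mem_filter.1 (F (s a) ⟨a, rfl⟩).2
          refine mem.2 ⟨fun a => (hF a).1, fun a b h => ?_, fun a => (hF a).2⟩
          have hab : s a = s b := by rw [← (hF a).2, ← (hF b).2]; exact congrArg κ h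
          simp only [eval_cast F hab] at h
          exact congrArg Subtype.val ((F (s b)).injective (Subtype.ext h))⟩
      left_inv := fun z => rfl
      right_inv := fun F => by
        funext i
        ext ⟨a, rfl⟩
        rfl }
  rw [← Fintype.card_coe, Fintype.card_congr e, Fintype.card_pi]
  simp [Fintype.card_embedding_eq, Fintype.card_subtype]
end

theorem card_filter_fin_eq_sub {m : ℕ} (a b : ℕ) (hb : b ≤ m) (P : ℕ → Prop) [DecidablePred P]
    (hP : ∀ n < m, P n ↔ a ≤ n ∧ n < b) : #{j : Fin m | P j} = b - a := by
  rw [← card_map Fin.valEmbedding, ← Nat.card_Ico a b]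
  congr 1
  ext n
  simp only [mem_map, mem_filter, mem_univ, true_and, Fin.valEmbedding_apply, mem_Ico]
  constructor
  · rintro ⟨j, hj, rfl⟩
    exact (hP j j.isLt).1 hj
  · intro hn
    exact ⟨⟨n, by omega⟩, (hP n (by omega)).2 hn, rfl⟩

section
variable {E : Type*} {k : ℕ}

theorem apply_eq_of_range_eq {f : (Fin k → E) → ℝ}
    (hf : ∀ (σ : Equiv.Perm (Fin k)) x, f (x ∘ σ) = f x) {x y : Fin k → E} (hx : Injective x)
    (hy : Injective y) (h : Set.range x = Set.range y) :
    f x = f y := by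
  let σ := (Equiv.ofInjective x hx).trans ((Equiv.setCongr h).trans (Equiv.ofInjective y hy).symm)
  have hσ : y ∘ σ = x := funext fun i => by
    simpa [σ] using Equiv.apply_ofInjective_symm hy ⟨x i, h ▸ Set.mem_range_self i⟩
  rw [← hσ, hf]

noncomputable def setKernel (f : (Fin k → E) → ℝ) (A : Finset E) : ℝ :=
  if h : #A = k then f fun i => A.equivFin.symm (i.cast h.symm) else 0

theorem apply_eq_setKernel {f : (Fin k → E) → ℝ}
    (hf : ∀ (σ : Equiv.Perm (Fin k)) x, f (x ∘ σ) = f x) {x : Fin k → E} (hx : Injective x)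
    {A : Finset E} (hA : Set.range x = A) : f x = setKernel f A := by
  classical
  have hcard : #A = k := by
    rw [← card_fin k, ← card_image_of_injective _ hx]
    exact congrArg card (coe_injective (by simpa using hA.symm))
  rw [setKernel, dif_pos hcard]
  refine apply_eq_of_range_eq hf hx (fun i j h => ?_) ?_
  · simpa using A.equivFin.symm.injective (Subtype.ext h)
  · rw [hA]
    ext a
    exact ⟨fun ha => ⟨(A.equivFin ⟨a, ha⟩).cast hcard, by simp⟩,
      by rintro ⟨i, rfl⟩; exact coe_mem _⟩
end

section
variable {E : Type*} [DecidableEq E]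

theorem mem_tuples {X : Finset E} {m : ℕ} {x : Fin m → E} :
    x ∈ tuples X m ↔ (∀ i, x i ∈ X) ∧ Injective x := by
  simp [tuples, Fintype.mem_piFinset]

theorem card_tuples (S : Finset E) (m : ℕ) : #(tuples S m) = (#S).descFactorial m := by
  have h := card_injective_fiberwise (α := Fin m) S (fun _ => ()) (fun _ => ())
  simpa [tuples] using h

theorem image_eq_iff_forall_mem {α : Type*} {s : Finset α} {x : α → E} (hx : Set.InjOn x s)
    {A : Finset E} (hA : #A = #s) : s.image x = A ↔ ∀ i ∈ s, x i ∈ A := by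
  refine ⟨fun h i hi => h ▸ mem_image_of_mem x hi, fun h => ?_⟩
  exact eq_of_subset_of_card_le (image_subset_iff.2 h) (by rw [card_image_of_injOn hx, hA])

theorem filter_image_univ_eq_tuples {X A : Finset E} {k : ℕ} (hA : A ∈ X.powersetCard k) :
    {x ∈ tuples X k | univ.image x = A} = tuples A k := by
  obtain ⟨hAX, hA⟩ := mem_powersetCard.1 hA
  ext x
  simp only [mem_filter, mem_tuples]
  constructor
  · rintro ⟨⟨-, hx⟩, rfl⟩
    exact ⟨fun i => mem_image_of_mem x (mem_univ i), hx⟩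
  · rintro ⟨hxA, hx⟩
    exact ⟨⟨fun i => hAX (hxA i), hx⟩,
      (image_eq_iff_forall_mem hx.injOn (by simpa using hA)).2 fun i _ => hxA i⟩

theorem sum_tuples_eq_factorial_mul_sum_setKernel (X : Finset E) {k : ℕ} {f : (Fin k → E) → ℝ}
    (hf : ∀ (σ : Equiv.Perm (Fin k)) x, f (x ∘ σ) = f x) :
    ∑ x ∈ tuples X k, f x = k.factorial * ∑ A ∈ X.powersetCard k, setKernel f A := by
  have maps_to (x : Fin k → E) (hx : x ∈ tuples X k) : univ.image x ∈ X.powersetCard k := by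
    obtain ⟨hxX, hx⟩ := mem_tuples.1 hx
    simpa [mem_powersetCard, image_subset_iff, card_image_of_injective _ hx] using hxX
  rw [← sum_fiberwise_of_maps_to maps_to, mul_sum]
  refine sum_congr rfl fun A hA => ?_
  have hfiber : ∀ x ∈ {x ∈ tuples X k | univ.image x = A}, f x = setKernel f A := by
    intro x hx
    rw [mem_filter] at hx
    obtain ⟨hx, rfl⟩ := hx
    exact apply_eq_setKernel hf (mem_tuples.1 hx).2 (by rw [coe_image, coe_univ, Set.image_univ])
  rw [sum_congr rfl hfiber, sum_const, filter_image_univ_eq_tuples hA, card_tuples,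
    (mem_powersetCard.1 hA).2, Nat.descFactorial_self, nsmul_eq_mul]

def headTailImages (k l : ℕ) {m : ℕ} (z : Fin m → E) : Finset E × Finset E :=
  (({j | (j : ℕ) < k} : Finset (Fin m)).image z,
    ({j | m - l ≤ (j : ℕ)} : Finset (Fin m)).image z)

theorem range_head_eq_headTailImages_fst {k m : ℕ} (l : ℕ) (hk : k ≤ m) (z : Fin m → E) :
    Set.range (fun i => z (Fin.castLE hk i)) = ↑((headTailImages k l z).1) := by
  rw [headTailImages, coe_image, coe_filter_univ, ← Fin.range_castLE hk, ← Set.range_comp]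
  rfl

theorem range_tail_eq_headTailImages_snd (k : ℕ) {l m : ℕ} (hl : l ≤ m) (z : Fin m → E) :
    Set.range (fun i : Fin l => z ⟨m - l + i, by omega⟩) = ↑((headTailImages k l z).2) := by
  rw [headTailImages, coe_image, coe_filter_univ]
  ext x
  simp only [Set.mem_range, Set.mem_image, Set.mem_ofPred_eq]
  constructor
  · rintro ⟨i, rfl⟩
    exact ⟨_, Nat.le_add_right _ _, rfl⟩
  · rintro ⟨j, hj, rfl⟩
    exact ⟨⟨j - (m - l), by omega⟩, congrArg z (Fin.ext (by simp; omega))⟩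

theorem filter_headTailImages_eq {X A B : Finset E} {k l m : ℕ} (hkm : k ≤ m) (hlm : l ≤ m)
    (hm : m ≤ k + l) (hAX : A ⊆ X) (hBX : B ⊆ X) (hA : #A = k) (hB : #B = l) :
    {z ∈ tuples X m | headTailImages k l z = (A, B)} =
      {z ∈ Fintype.piFinset fun _ : Fin m => A ∪ B | Injective z ∧ ∀ j : Fin m,
        (decide (z j ∈ A), decide (z j ∈ B)) =
          (decide ((j : ℕ) < k), decide (m - l ≤ (j : ℕ)))} := by
  ext z
  simp only [mem_filter, mem_tuples, Fintype.mem_piFinset, headTailImages, Prod.mk.injEq,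
    decide_eq_decide]
  constructor
  · rintro ⟨⟨-, hz⟩, rfl, rfl⟩
    simp only [hz.mem_finset_image, mem_filter, mem_univ, true_and, mem_union]
    exact ⟨fun j => by omega, hz, fun _ => trivial⟩
  · rintro ⟨hzAB, hz, hzκ⟩
    refine ⟨⟨fun j => union_subset hAX hBX (hzAB j), hz⟩, ?_, ?_⟩
    · refine (image_eq_iff_forall_mem hz.injOn ?_).2 fun j hj => (hzκ j).1.2 (by simpa using hj)
      rw [Fin.card_filter_val_lt]
      omega
    · refine (image_eq_iff_forall_mem hz.injOn ?_).2 fun j hj => (hzκ j).2.2 (by simpa using hj)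
      rw [card_filter_fin_eq_sub (m - l) m le_rfl _ fun n hn => by omega]
      omega

theorem card_filter_headTailImages {X A B : Finset E} {k l m : ℕ} (hkm : k ≤ m) (hlm : l ≤ m)
    (hm : m ≤ k + l) (hAX : A ⊆ X) (hBX : B ⊆ X) (hA : #A = k) (hB : #B = l)
    (hAB : #(A ∪ B) = m) :
    #{z ∈ tuples X m | headTailImages k l z = (A, B)} =
      (m - l).factorial * (k + l - m).factorial * (m - k).factorial := by
  rw [filter_headTailImages_eq hkm hlm hm hAX hBX hA hB]
  -- `convert` rather than `rw`: the two filters carry different `Decidable` instances.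
  convert (card_injective_fiberwise (A ∪ B) (fun x => (decide (x ∈ A), decide (x ∈ B)))
      (fun j : Fin m => (decide ((j : ℕ) < k), decide (m - l ≤ (j : ℕ))))) using 3
  rw [Fintype.prod_prod_type, Fintype.prod_bool, Fintype.prod_bool, Fintype.prod_bool]
  simp only [Prod.mk.injEq, decide_eq_true_eq, decide_eq_false_iff_not]
  have hAiB : #{x ∈ A ∪ B | x ∈ A ∧ x ∈ B} = k + l - m := by
    have := card_inter_add_card_union A B
    rw [show {x ∈ A ∪ B | x ∈ A ∧ x ∈ B} = A ∩ B by ext; simp; tauto]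
    omega
  have hAdB : #{x ∈ A ∪ B | x ∈ A ∧ x ∉ B} = m - l := by
    have := card_sdiff_add_card A B
    rw [show {x ∈ A ∪ B | x ∈ A ∧ x ∉ B} = A \ B by ext; simp; tauto]
    omega
  have hBdA : #{x ∈ A ∪ B | x ∉ A ∧ x ∈ B} = m - k := by
    have := card_sdiff_add_card B A
    rw [union_comm] at this
    rw [show {x ∈ A ∪ B | x ∉ A ∧ x ∈ B} = B \ A by ext; simp; tauto]
    omega
  have hnone : #{x ∈ A ∪ B | x ∉ A ∧ x ∉ B} = 0 := by
    simp only [card_eq_zero, filter_eq_empty_iff, mem_union]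
    tauto
  rw [hAiB, hAdB, hBdA, hnone,
    card_filter_fin_eq_sub (m - l) k hkm (fun n => n < k ∧ m - l ≤ n) fun n _ => by omega,
    card_filter_fin_eq_sub 0 (m - l) (by omega) (fun n => n < k ∧ ¬ m - l ≤ n) fun n _ => by omega,
    card_filter_fin_eq_sub k m le_rfl (fun n => ¬ n < k ∧ m - l ≤ n) fun n _ => by omega,
    card_filter_fin_eq_sub 0 0 (by omega) (fun n => ¬ n < k ∧ ¬ m - l ≤ n) fun n _ => by omega,
    show k - (m - l) = k + l - m by omega]
  simp only [Nat.sub_zero, Nat.descFactorial_self, Nat.factorial_zero]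
  ring

theorem headTailImages_mem {X : Finset E} {k l m : ℕ} (hkm : k ≤ m) (hlm : l ≤ m)
    (hm : m ≤ k + l) {z : Fin m → E} (hz : z ∈ tuples X m) :
    headTailImages k l z ∈ {p ∈ X.powersetCard k ×ˢ X.powersetCard l | #(p.1 ∪ p.2) = m} := by
  obtain ⟨hzX, hz⟩ := mem_tuples.1 hz
  simp only [headTailImages, mem_filter, mem_product, mem_powersetCard, image_subset_iff,
    ← image_union, ← filter_or, card_image_of_injective _ hz, Fin.card_filter_val_lt,
    card_filter_fin_eq_sub (m - l) m le_rfl (m - l ≤ ·) fun n hn => by omega,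
    card_filter_fin_eq_sub 0 m le_rfl (fun n => n < k ∨ m - l ≤ n) fun n hn => by omega]
  exact ⟨⟨⟨fun j _ => hzX j, by omega⟩, fun j _ => hzX j, by omega⟩, by omega⟩

theorem prodKernel_eq_setKernel_mul {k l m : ℕ} (hkm : k ≤ m) (hlm : l ≤ m)
    {f : (Fin k → E) → ℝ} {g : (Fin l → E) → ℝ}
    (hf : ∀ (σ : Equiv.Perm (Fin k)) x, f (x ∘ σ) = f x)
    (hg : ∀ (σ : Equiv.Perm (Fin l)) x, g (x ∘ σ) = g x) {z : Fin m → E} (hz : Injective z) :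
    prodKernel f g m z =
      setKernel f (headTailImages k l z).1 * setKernel g (headTailImages k l z).2 := by
  rw [prodKernel, dif_pos ⟨hkm, hlm⟩,
    apply_eq_setKernel hf (x := fun i => z (Fin.castLE hkm i))
      (hz.comp (Fin.castLE_injective hkm)) (range_head_eq_headTailImages_fst l hkm z),
    apply_eq_setKernel hg (fun i j h => Fin.ext (by simpa using hz h))
      (range_tail_eq_headTailImages_snd k hlm z)]

theorem sum_prodKernel_tuples (X : Finset E) {k l m : ℕ} (hkm : k ≤ m) (hlm : l ≤ m)
    (hm : m ≤ k + l) {f : (Fin k → E) → ℝ} {g : (Fin l → E) → ℝ}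
    (hf : ∀ (σ : Equiv.Perm (Fin k)) x, f (x ∘ σ) = f x)
    (hg : ∀ (σ : Equiv.Perm (Fin l)) x, g (x ∘ σ) = g x) :
    ∑ z ∈ tuples X m, prodKernel f g m z =
      (m - l).factorial * (k + l - m).factorial * (m - k).factorial *
        ∑ p ∈ {p ∈ X.powersetCard k ×ˢ X.powersetCard l | #(p.1 ∪ p.2) = m},
          setKernel f p.1 * setKernel g p.2 := by
  rw [← sum_fiberwise_of_maps_to fun z => headTailImages_mem hkm hlm hm, mul_sum]
  refine sum_congr rfl fun ⟨A, B⟩ hAB => ?_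
  simp only [mem_filter, mem_product, mem_powersetCard] at hAB
  obtain ⟨⟨⟨hAX, hA⟩, hBX, hB⟩, hAB⟩ := hAB
  have hfiber : ∀ z ∈ {z ∈ tuples X m | headTailImages k l z = (A, B)},
      prodKernel f g m z = setKernel f A * setKernel g B := by
    intro z hz
    rw [mem_filter] at hz
    rw [prodKernel_eq_setKernel_mul hkm hlm hf hg (mem_tuples.1 hz.1).2, hz.2]
  rw [sum_congr rfl hfiber, sum_const,
    card_filter_headTailImages hkm hlm hm hAX hBX hA hB hAB, nsmul_eq_mul]
  push_cast
  ring

end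

/-- Product formula for U-statistics: the product of U-statistics of orders `k` and `l` with
symmetric kernels `f`, `g` equals
`∑_{m=max(k,l)}^{k+l} ∑_{z ∈ X^{(m)}} f(z₁,…,z_k) g(z_{m-l+1},…,z_m) / ((k+l-m)!(m-k)!(m-l)!)`;
in particular it is a finite sum of U-statistics of order at most `k + l`. -/
theorem stmt6 (d k l : ℕ) [DecidableEq (EuclideanSpace ℝ (Fin d))]
    (f : (Fin k → EuclideanSpace ℝ (Fin d)) → ℝ) (g : (Fin l → EuclideanSpace ℝ (Fin d)) → ℝ)
    (hf : ∀ (σ : Equiv.Perm (Fin k)) x, f (x ∘ σ) = f x)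
    (hg : ∀ (σ : Equiv.Perm (Fin l)) x, g (x ∘ σ) = g x)
    (X : Finset (EuclideanSpace ℝ (Fin d))) :
    ((1 : ℝ) / k.factorial * ∑ x ∈ tuples X k, f x) *
        ((1 : ℝ) / l.factorial * ∑ x ∈ tuples X l, g x) =
      ∑ m ∈ Finset.Icc (max k l) (k + l),
        (∑ z ∈ tuples X m, prodKernel f g m z) /
          ((k + l - m).factorial * (m - k).factorial * (m - l).factorial) := by
  have hproduct : ((1 : ℝ) / k.factorial * ∑ x ∈ tuples X k, f x) *
      ((1 : ℝ) / l.factorial * ∑ x ∈ tuples X l, g x) =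
        ∑ p ∈ X.powersetCard k ×ˢ X.powersetCard l, setKernel f p.1 * setKernel g p.2 := by
    rw [sum_tuples_eq_factorial_mul_sum_setKernel X hf,
      sum_tuples_eq_factorial_mul_sum_setKernel X hg, sum_product, ← sum_mul_sum]
    field_simp
  have hcard (p : Finset _ × Finset _) (hp : p ∈ X.powersetCard k ×ˢ X.powersetCard l) :
      #(p.1 ∪ p.2) ∈ Icc (max k l) (k + l) := by
    simp only [mem_product, mem_powersetCard] at hp
    rw [mem_Icc, ← hp.1.2, ← hp.2.2]
    exact ⟨max_le (card_le_card subset_union_left) (card_le_card subset_union_right),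
      card_union_le _ _⟩
  rw [hproduct, ← sum_fiberwise_of_maps_to hcard]
  refine sum_congr rfl fun m hm => ?_
  obtain ⟨hmax, hm⟩ := mem_Icc.1 hm
  rw [sum_prodKernel_tuples X (le_of_max_le_left hmax) (le_of_max_le_right hmax) hm hf hg]
  field_simp
end

section
/- Let $(\lambda_i)_{i \geq 1}$ and $(\mu_i)_{i \geq 1}$ be sequences in $[0,1)$ satisfying the interlacing property $\lambda_i \geq \mu_i \geq \lambda_{i+1}$ for all $i$, with only finitely many nonzero terms. Let $X = \sum_i \mathrm{Bernoulli}(\lambda_i)$ and $Y = \sum_i \mathrm{Bernoulli}(\mu_i)$ be sums of independent Bernoulli random variables. Then for every integer $k \geq 0$, $\mathbb{P}(Y \leq k) \leq (1 - \lambda_1)^{-(k+1)} \, \mathbb{P}(X \leq k)$. -/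
/-!
Write `X' = ∑ᵢ Bernoulli(λᵢ₊₁)`, so that `X = Bernoulli(λ₀) + X'` and `P(X ≤ k) ≥ (1 - λ₀) P(X' ≤ k)`.
Since `P(S ≤ k)` decreases in each parameter of a Bernoulli sum `S` and `μᵢ ≥ λᵢ₊₁`, we get
`P(Y ≤ k) ≤ P(X' ≤ k) ≤ (1 - λ₀)⁻¹ P(X ≤ k)`, and `(1 - λ₀)⁻¹ ≤ (1 - λ₀)^{-(k+1)}`.
-/

/-- `P(X ≤ k)` for `X` a sum of independent Bernoulli random variables with success
probabilities `λ₀, λ₁, …, λ_{N-1}` (and `0` afterwards):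
`∑_{J ⊆ {0,…,N-1}, |J| ≤ k} ∏_{j ∈ J} λⱼ ∏_{j ∉ J} (1-λⱼ)`. -/
noncomputable def PLE (lam : ℕ → ℝ) (N k : ℕ) : ℝ :=
  ∑ J ∈ (Finset.range N).powerset.filter (fun J => J.card ≤ k),
    (∏ j ∈ J, lam j) * ∏ j ∈ Finset.range N \ J, (1 - lam j)

open Finset

noncomputable def bernoulliWeight (lam : ℕ → ℝ) (N : ℕ) (J : Finset ℕ) : ℝ :=
  (∏ j ∈ J, lam j) * ∏ j ∈ range N \ J, (1 - lam j)

section Recursion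

variable (lam : ℕ → ℝ) {N : ℕ} {J : Finset ℕ}

lemma bernoulliWeight_succ_of_subset (hJ : J ⊆ range N) :
    bernoulliWeight lam (N + 1) J = (1 - lam N) * bernoulliWeight lam N J := by
  have hN : N ∉ J := fun h => notMem_range_self (hJ h)
  rw [bernoulliWeight, bernoulliWeight, range_add_one, insert_sdiff_of_notMem _ hN,
    prod_insert (by simp), mul_left_comm]

lemma bernoulliWeight_succ_insert (hJ : J ⊆ range N) :
    bernoulliWeight lam (N + 1) (insert N J) = lam N * bernoulliWeight lam N J := by
  have hN : N ∉ J := fun h => notMem_range_self (hJ h)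
  rw [bernoulliWeight, bernoulliWeight, range_add_one, insert_sdiff_insert,
    sdiff_insert_of_notMem notMem_range_self, prod_insert hN, mul_assoc]

lemma PLE_succ (k : ℕ) :
    PLE lam (N + 1) k = (1 - lam N) * PLE lam N k
      + lam N * ∑ J ∈ (range N).powerset with J.card < k, bernoulliWeight lam N J := by
  change ∑ J ∈ _ with _, bernoulliWeight lam (N + 1) J = (1 - lam N) * ∑ J ∈ _ with _, _ + _
  simp only [sum_filter, mul_sum]
  rw [range_add_one, sum_powerset_insert notMem_range_self]
  congr 1 <;> refine sum_congr rfl fun J hJ => ?_ <;> rw [mem_powerset] at hJ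
  · rw [bernoulliWeight_succ_of_subset lam hJ, mul_ite, mul_zero]
    rfl
  · have hN : N ∉ J := fun h => notMem_range_self (hJ h)
    rw [bernoulliWeight_succ_insert lam hJ, card_insert_of_notMem hN, mul_ite, mul_zero]
    rfl

lemma PLE_succ_zero : PLE lam (N + 1) 0 = (1 - lam N) * PLE lam N 0 := by
  simp [PLE_succ]

lemma PLE_succ_succ (k : ℕ) :
    PLE lam (N + 1) (k + 1) = (1 - lam N) * PLE lam N (k + 1) + lam N * PLE lam N k := by
  simp only [PLE_succ, Nat.lt_succ_iff]
  rfl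

lemma PLE_zero (k : ℕ) : PLE lam 0 k = 1 := by
  simp [PLE, filter_singleton]

end Recursion

section Monotonicity

variable {lam : ℕ → ℝ} (hlam : ∀ i, lam i ∈ Set.Icc (0 : ℝ) 1)
include hlam

lemma bernoulliWeight_nonneg (N : ℕ) (J : Finset ℕ) : 0 ≤ bernoulliWeight lam N J :=
  mul_nonneg (prod_nonneg fun i _ => (hlam i).1)
    (prod_nonneg fun i _ => sub_nonneg.2 (hlam i).2)

lemma PLE_nonneg (N k : ℕ) : 0 ≤ PLE lam N k :=
  sum_nonneg fun J _ => bernoulliWeight_nonneg hlam N J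

lemma PLE_mono {k k' : ℕ} (N : ℕ) (hk : k ≤ k') : PLE lam N k ≤ PLE lam N k' :=
  sum_le_sum_of_subset_of_nonneg (monotone_filter_right _ fun _ _ hJ => hJ.trans hk)
    fun J _ _ => bernoulliWeight_nonneg hlam N J

lemma PLE_succ_le (N k : ℕ) : PLE lam (N + 1) k ≤ PLE lam N k := by
  have h0 := (hlam N).1
  have h1 := (hlam N).2
  cases k with
  | zero => rw [PLE_succ_zero]; nlinarith [PLE_nonneg hlam N 0]
  | succ k =>
    rw [PLE_succ_succ]
    nlinarith [PLE_mono hlam N (Nat.le_succ k)]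

lemma one_sub_mul_PLE_shift_le_PLE_succ (N k : ℕ) :
    (1 - lam 0) * PLE (fun i => lam (i + 1)) N k ≤ PLE lam (N + 1) k := by
  induction N generalizing k with
  | zero => cases k <;> simp [PLE_succ_zero, PLE_succ_succ, PLE_zero, (hlam 0).1]
  | succ N ih =>
    have h0 := (hlam (N + 1)).1
    have h1 := sub_nonneg.2 (hlam (N + 1)).2
    cases k with
    | zero =>
      rw [PLE_succ_zero, PLE_succ_zero, mul_left_comm]
      exact mul_le_mul_of_nonneg_left (ih 0) h1
    | succ k =>
      rw [PLE_succ_succ lam, PLE_succ_succ (fun i => lam (i + 1))]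
      have := add_le_add (mul_le_mul_of_nonneg_left (ih (k + 1)) h1)
        (mul_le_mul_of_nonneg_left (ih k) h0)
      linarith

lemma one_sub_mul_PLE_shift_le (N k : ℕ) :
    (1 - lam 0) * PLE (fun i => lam (i + 1)) N k ≤ PLE lam N k := by
  cases N with
  | zero => simp [PLE_zero, (hlam 0).1]
  | succ N =>
    calc (1 - lam 0) * PLE (fun i => lam (i + 1)) (N + 1) k
        ≤ (1 - lam 0) * PLE (fun i => lam (i + 1)) N k :=
          mul_le_mul_of_nonneg_left (PLE_succ_le (fun i => hlam (i + 1)) N k)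
            (sub_nonneg.2 (hlam 0).2)
      _ ≤ PLE lam (N + 1) k := one_sub_mul_PLE_shift_le_PLE_succ hlam N k

end Monotonicity

lemma PLE_le_PLE_of_le {a b : ℕ → ℝ} (ha : ∀ i, 0 ≤ a i) (hb : ∀ i, b i ≤ 1)
    (hab : ∀ i, a i ≤ b i) (N k : ℕ) : PLE b N k ≤ PLE a N k := by
  have ha' : ∀ i, a i ∈ Set.Icc (0 : ℝ) 1 := fun i => ⟨ha i, (hab i).trans (hb i)⟩
  have hb' : ∀ i, b i ∈ Set.Icc (0 : ℝ) 1 := fun i => ⟨(ha i).trans (hab i), hb i⟩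
  induction N generalizing k with
  | zero => rw [PLE_zero, PLE_zero]
  | succ N ih =>
    have h1 := sub_nonneg.2 (hb N)
    cases k with
    | zero =>
      rw [PLE_succ_zero, PLE_succ_zero]
      exact mul_le_mul (by linarith [hab N]) (ih 0) (PLE_nonneg hb' N 0) (by linarith [hab N, hb N])
    | succ k =>
      rw [PLE_succ_succ, PLE_succ_succ]
      have hA := sub_nonneg.2 (PLE_mono ha' N (Nat.le_succ k))
      calc (1 - b N) * PLE b N (k + 1) + b N * PLE b N k
          ≤ (1 - b N) * PLE a N (k + 1) + b N * PLE a N k :=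
            add_le_add (mul_le_mul_of_nonneg_left (ih (k + 1)) h1)
              (mul_le_mul_of_nonneg_left (ih k) (hb' N).1)
        _ ≤ (1 - a N) * PLE a N (k + 1) + a N * PLE a N k := by
            nlinarith [mul_nonneg (sub_nonneg.2 (hab N)) hA]

theorem stmt11_general (lam mu : ℕ → ℝ) (N k : ℕ)
    (hlam : ∀ i, 0 ≤ lam i ∧ lam i < 1) (hmu : ∀ i, 0 ≤ mu i ∧ mu i < 1)
    (hinter : ∀ i, mu i ≤ lam i ∧ lam (i + 1) ≤ mu i) :
    PLE mu N k ≤ (1 - lam 0)⁻¹ ^ (k + 1) * PLE lam N k := by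
  have hlam' : ∀ i, lam i ∈ Set.Icc (0 : ℝ) 1 := fun i => ⟨(hlam i).1, (hlam i).2.le⟩
  have hpos : 0 < 1 - lam 0 := sub_pos.2 (hlam 0).2
  have hinv : 1 ≤ (1 - lam 0)⁻¹ := (one_le_inv₀ hpos).2 (by linarith [(hlam 0).1])
  calc PLE mu N k ≤ PLE (fun i => lam (i + 1)) N k :=
        PLE_le_PLE_of_le (fun i => (hlam (i + 1)).1) (fun i => (hmu i).2.le)
          (fun i => (hinter i).2) N k
    _ ≤ (1 - lam 0)⁻¹ * PLE lam N k := by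
        rw [← div_eq_inv_mul, le_div_iff₀' hpos]
        exact one_sub_mul_PLE_shift_le hlam' N k
    _ ≤ (1 - lam 0)⁻¹ ^ (k + 1) * PLE lam N k :=
        mul_le_mul_of_nonneg_right (le_self_pow₀ hinv (Nat.succ_ne_zero k))
          (PLE_nonneg hlam' N k)

/-- If `(λᵢ)` and `(μᵢ)` are sequences in `[0,1)` with only finitely many nonzero terms
satisfying the interlacing property `λᵢ ≥ μᵢ ≥ λ_{i+1}`, and `X`, `Y` are sums of independent
Bernoullis with parameters `(λᵢ)`, `(μᵢ)` respectively, then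
`P(Y ≤ k) ≤ (1-λ₀)^{-(k+1)} P(X ≤ k)` for every `k ≥ 0`. -/
theorem stmt11 (lam mu : ℕ → ℝ) (N k : ℕ)
    (hlam : ∀ i, 0 ≤ lam i ∧ lam i < 1) (hmu : ∀ i, 0 ≤ mu i ∧ mu i < 1)
    (hinter : ∀ i, mu i ≤ lam i ∧ lam (i + 1) ≤ mu i)
    (hsupp : ∀ i, N ≤ i → lam i = 0 ∧ mu i = 0) :
    PLE mu N k ≤ (1 - lam 0)⁻¹ ^ (k + 1) * PLE lam N k :=
  stmt11_general lam mu N k hlam hmu hinter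
end
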